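/- Let g be the 4-dimensional solvable real Lie algebra with basis e_1,…,e_4 and nonzero brackets [e_2,e_3] = −e_3 and [e_2,e_4] = e_4, and for t ∈ ℝ let K_t be the endomorphism equal to +id on g⁺_t := span(e_2, e_3) and −id on g⁻_t := span(e_1, e_4 + t e_2). Then K_0 is linear C∞-pure-and-full at the 2nd stage, whereas for every t ≠ 0 the structure K_t is neither linear C∞-pure at the 2nd stage (one has 0 ≠ [e^3∧e^4] ∈ H^{2+}_{K_t}(g;ℝ) ∩ H^{2−}_{K_t}(g;ℝ), since e^3∧e^4 is K_t-anti-invariant, d-closed, not exact, and e^3∧e^4 + (1/t) d(e^3) = (1/t)(e^2 − t e^4)∧e^3 is K_t-invariant) nor linear C∞-full at the 2nd stage (the class [e^1∧e^2] does not lie in H^{2+}_{K_t}(g;ℝ) + H^{2−}_{K_t}(g;ℝ)). In particular, for nilpotent Lie algebras replaced by solvable ones, linear C∞-pure-and-full-ness at the 2nd stage can fail in dimension 4, and being linear C∞-pure or linear C∞-full at the 2nd stage is not stable under deformations. -/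

import Mathlib

/-!
In the basis `e 0, …, e 3` (the paper's `e_1, …, e_4`), the closed 2-forms are spanned by
`e⁰∧e¹, e²∧e³, e¹∧e², e³∧e¹`, the last two being `d e²` and `d e³`. Since `dβ (x, y) = -β ⁅x, y⁆`,
exact 2-forms vanish on the commuting pairs `(e 0, e 1)` and `(e 2, e 3)`, so evaluation on these
pairs gives coordinates on `H²(g) = ℝ [e⁰∧e¹] ⊕ ℝ [e²∧e³]`.

`K_t` fixes `e 1, e 2`, negates `e 0` and sends `e 3` to `-(e 3 + 2t e 1)`. For `t = 0` a
`K`-invariant form vanishes on both pairs, so `H⁺ = 0`, while both generators are anti-invariant,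
so `H⁻ = H²`. For `t ≠ 0` the coordinate on `(e 0, e 1)` still kills `H⁺`, and it kills `H⁻`
because a closed form vanishes on `(e 0, e 3)`, so anti-invariance there reads
`2t α(e 0, e 1) = 0`; yet it takes the value `1` on `[e⁰∧e¹]`. Meanwhile `[e²∧e³] = [e²∧e³ + t⁻¹ e¹∧e²]` has
both an anti-invariant and an invariant representative.
-/

open scoped BigOperators

noncomputable section ChevalleyEilenberg

variable (g : Type*) [LieRing g] [LieAlgebra ℝ g]

/-- The Chevalley–Eilenberg differential of an alternating `k`-form on a real Lie
algebra, as a function on `(k+1)`-tuples: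
`(dα)(x_0,…,x_k) = Σ_{i<j} (−1)^{i+j} α([x_i,x_j], x_0,…,x̂_i,…,x̂_j,…,x_k)`. -/
def ceD : {k : ℕ} → AlternatingMap ℝ g ℝ (Fin k) → ((Fin (k + 1) → g) → ℝ)
  | 0, _ => 0
  | (k + 1), α => fun x =>
      ∑ i : Fin (k + 2), ∑ j : Fin (k + 2),
        if hij : (i : ℕ) < (j : ℕ) then
          (-1 : ℝ) ^ ((i : ℕ) + (j : ℕ)) *
            α (fun m : Fin (k + 1) =>
                if hm : (m : ℕ) = 0 then ⁅x i, x j⁆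
                else
                  x (j.succAbove
                      ((⟨(i : ℕ), by omega⟩ : Fin (k + 1)).succAbove
                        (⟨(m : ℕ) - 1, by omega⟩ : Fin k))))
        else 0

theorem ceD_zero {k : ℕ} : ceD g (0 : AlternatingMap ℝ g ℝ (Fin k)) = 0 := by
  cases k with
  | zero => rfl
  | succ k => funext x; simp [ceD]

theorem ceD_add {k : ℕ} (α β : AlternatingMap ℝ g ℝ (Fin k)) :
    ceD g (α + β) = ceD g α + ceD g β := by
  cases k with
  | zero => funext x; simp [ceD]
  | succ k =>
    funext x
    simp only [ceD, Pi.add_apply, AlternatingMap.add_apply]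
    rw [← Finset.sum_add_distrib]
    refine Finset.sum_congr rfl fun i _ => ?_
    rw [← Finset.sum_add_distrib]
    refine Finset.sum_congr rfl fun j _ => ?_
    split
    · ring
    · ring

theorem ceD_smul {k : ℕ} (c : ℝ) (α : AlternatingMap ℝ g ℝ (Fin k)) :
    ceD g (c • α) = c • ceD g α := by
  cases k with
  | zero => funext x; simp [ceD]
  | succ k =>
    funext x
    simp only [ceD, Pi.smul_apply, AlternatingMap.smul_apply, smul_eq_mul,
      Finset.mul_sum]
    refine Finset.sum_congr rfl fun i _ => ?_
    refine Finset.sum_congr rfl fun j _ => ?_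
    split
    · ring
    · ring

/-- The space of `d`-closed `k`-forms. -/
def Zsub (k : ℕ) : Submodule ℝ (AlternatingMap ℝ g ℝ (Fin k)) where
  carrier := {α | ceD g α = 0}
  add_mem' := by
    intro a b ha hb
    simp only [Set.mem_setOf_eq] at *
    rw [ceD_add, ha, hb, add_zero]
  zero_mem' := by
    simpa only [Set.mem_setOf_eq] using ceD_zero g
  smul_mem' := by
    intro c a ha
    simp only [Set.mem_setOf_eq] at *
    rw [ceD_smul, ha, smul_zero]

/-- The space of `d`-exact `k`-forms. -/
def Bsub : (k : ℕ) → Submodule ℝ (AlternatingMap ℝ g ℝ (Fin k))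
  | 0 => ⊥
  | (k + 1) =>
    { carrier := {α | ∃ β : AlternatingMap ℝ g ℝ (Fin k), ceD g β = ⇑α}
      add_mem' := by
        rintro a b ⟨βa, hβa⟩ ⟨βb, hβb⟩
        exact ⟨βa + βb, by rw [ceD_add, hβa, hβb]; ext x; simp⟩
      zero_mem' := ⟨0, by rw [ceD_zero]; ext x; simp⟩
      smul_mem' := by
        rintro c a ⟨β, hβ⟩
        exact ⟨c • β, by rw [ceD_smul, hβ]; rfl⟩ }

/-- The `k`-th Lie algebra cohomology `H^k(g;ℝ) = ker d / im d`. -/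
abbrev Hcoh (k : ℕ) : Type _ :=
  @HasQuotient.Quotient ↥(Zsub g k) _ Submodule.hasQuotient ((Bsub g k).comap (Zsub g k).subtype)

/-- The cohomology class of a `d`-closed `k`-form. -/
def cls {k : ℕ} (α : AlternatingMap ℝ g ℝ (Fin k)) (hα : ceD g α = 0) : Hcoh g k :=
  Submodule.Quotient.mk (⟨α, hα⟩ : Zsub g k)

/-- The subgroup `H^{k+}_K(g;ℝ)` of classes admitting a `d`-closed `K`-invariant
representative.  (The set of such classes is a linear subspace, so taking its span
does not enlarge it.) -/
def Hplus (K : g →ₗ[ℝ] g) (k : ℕ) : Submodule ℝ (Hcoh g k) :=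
  Submodule.span ℝ
    {c | ∃ (α : AlternatingMap ℝ g ℝ (Fin k)) (hα : ceD g α = 0),
        α.compLinearMap K = α ∧ c = cls g α hα}

/-- The subgroup `H^{k−}_K(g;ℝ)` of classes admitting a `d`-closed
`K`-anti-invariant representative. -/
def Hminus (K : g →ₗ[ℝ] g) (k : ℕ) : Submodule ℝ (Hcoh g k) :=
  Submodule.span ℝ
    {c | ∃ (α : AlternatingMap ℝ g ℝ (Fin k)) (hα : ceD g α = 0),
        α.compLinearMap K = -α ∧ c = cls g α hα}

/-- The wedge product of `k` linear functionals, as an alternating `k`-form. -/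
def wedge {k : ℕ} (fs : Fin k → (g →ₗ[ℝ] ℝ)) :
    AlternatingMap ℝ g ℝ (Fin k) :=
  MultilinearMap.alternatization
    ((MultilinearMap.mkPiAlgebra ℝ (Fin k) ℝ).compLinearMap fs)

end ChevalleyEilenberg

namespace AlternatingMap

variable {R M N : Type*} [CommRing R] [AddCommGroup M] [Module R M] [AddCommGroup N] [Module R N]

theorem map_pair_swap (α : M [⋀^Fin 2]→ₗ[R] N) (x y : M) : α ![y, x] = -α ![x, y] := by
  have h : (![y, x] : Fin 2 → M) = ![x, y] ∘ Equiv.swap 0 1 := by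
    funext m; fin_cases m <;> rfl
  rw [h]; exact α.map_swap _ (by decide)

theorem map_pair_neg_left (α : M [⋀^Fin 2]→ₗ[R] N) (x y : M) : α ![-x, y] = -α ![x, y] := by
  rw [← neg_one_smul R x, α.map_vecCons_smul, neg_one_smul]

theorem map_pair_neg_right (α : M [⋀^Fin 2]→ₗ[R] N) (x y : M) : α ![x, -y] = -α ![x, y] := by
  rw [map_pair_swap, map_pair_neg_left, map_pair_swap, neg_neg]

theorem map_pair_add_smul_right (α : M [⋀^Fin 2]→ₗ[R] N) (x y z : M) (c : R) :
    α ![x, y + c • z] = α ![x, y] + c • α ![x, z] := by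
  rw [map_pair_swap, α.map_vecCons_add, α.map_vecCons_smul, map_pair_swap α x, map_pair_swap α x]
  module

theorem map_pair_zero_left (α : M [⋀^Fin 2]→ₗ[R] N) (y : M) : α ![0, y] = 0 :=
  α.map_coord_zero 0 rfl

theorem compLinearMap_apply_pair (α : M [⋀^Fin 2]→ₗ[R] N) (K : M →ₗ[R] M) (x y : M) :
    α.compLinearMap K ![x, y] = α ![K x, K y] := by
  rw [compLinearMap_apply]
  congr 1; funext m; fin_cases m <;> rfl

theorem ext_basis_pair {ι : Type*} [LinearOrder ι] (b : Module.Basis ι R M)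
    {α β : M [⋀^Fin 2]→ₗ[R] N} (h : ∀ i j, i < j → α ![b i, b j] = β ![b i, b j]) : α = β := by
  refine b.ext_alternating fun v hv => ?_
  have hpair : (fun m => b (v m)) = ![b (v 0), b (v 1)] := by funext m; fin_cases m <;> rfl
  rw [hpair]
  rcases lt_trichotomy (v 0) (v 1) with hlt | heq | hgt
  · exact h _ _ hlt
  · exact absurd (hv heq) (by decide)
  · rw [map_pair_swap, map_pair_swap β, h _ _ hgt]

end AlternatingMap

theorem Module.Basis.coord_linearMap_apply {R M ι : Type*} [CommRing R] [AddCommGroup M]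
    [Module R M] [Fintype ι] (b : Module.Basis ι R M) (f : M →ₗ[R] M) (k : ι) (x : M) :
    b.coord k (f x) = ∑ i, b.coord i x * b.coord k (f (b i)) := by
  conv_lhs => rw [← b.sum_repr x]
  simp only [map_sum, map_smul, smul_eq_mul, Module.Basis.coord_apply]

section LieCohomology

variable {g : Type*} [LieRing g] [LieAlgebra ℝ g]

theorem wedge_one_apply (f : Fin 1 → (g →ₗ[ℝ] ℝ)) (x : Fin 1 → g) :
    wedge g f x = f 0 (x 0) := by
  simp [wedge, MultilinearMap.alternatization_apply]

theorem wedge_two_apply (f : Fin 2 → (g →ₗ[ℝ] ℝ)) (x : Fin 2 → g) :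
    wedge g f x = f 0 (x 0) * f 1 (x 1) - f 0 (x 1) * f 1 (x 0) := by
  rw [wedge, MultilinearMap.alternatization_apply,
    show (Finset.univ : Finset (Equiv.Perm (Fin 2))) = {1, Equiv.swap 0 1} by decide,
    Finset.sum_insert (by decide), Finset.sum_singleton]
  simp [Fin.prod_univ_two]
  ring

theorem ceD_one_apply (β : AlternatingMap ℝ g ℝ (Fin 1)) (x : Fin 2 → g) :
    ceD g β x = -β ![⁅x 0, x 1⁆] := by
  simp [ceD, Fin.sum_univ_two]
  congr 1; funext m; fin_cases m; rfl

theorem ceD_two_apply (α : AlternatingMap ℝ g ℝ (Fin 2)) (x : Fin 3 → g) :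
    ceD g α x = -α ![⁅x 0, x 1⁆, x 2] + α ![⁅x 0, x 2⁆, x 1] - α ![⁅x 1, x 2⁆, x 0] := by
  simp [ceD, Fin.sum_univ_three]
  rw [show ((-1 : ℝ)) ^ 3 = -1 by norm_num, neg_one_mul, ← sub_eq_add_neg]
  refine congrArg₂ (· - ·) (congrArg₂ (· + ·) (congrArg (-·) (congrArg α ?_)) (congrArg α ?_))
    (congrArg α ?_) <;> funext m <;> fin_cases m <;> simp [Fin.succAbove]

theorem cls_eq_zero_iff {k : ℕ} {α : AlternatingMap ℝ g ℝ (Fin (k + 1))} (hα : ceD g α = 0) :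
    cls g α hα = 0 ↔ ∃ β, ceD g β = ⇑α :=
  Submodule.Quotient.mk_eq_zero _

theorem cls_eq_cls_of_ceD_eq_sub {k : ℕ} {α α' : AlternatingMap ℝ g ℝ (Fin (k + 1))}
    (hα : ceD g α = 0) (hα' : ceD g α' = 0) {β : AlternatingMap ℝ g ℝ (Fin k)}
    (hβ : ceD g β = ⇑(α - α')) : cls g α hα = cls g α' hα' :=
  (Submodule.Quotient.eq _).2 ⟨β, hβ⟩

theorem apply_pair_eq_zero_of_ceD_eq {α : AlternatingMap ℝ g ℝ (Fin 2)}
    {β : AlternatingMap ℝ g ℝ (Fin 1)} (hβ : ceD g β = ⇑α) {x y : g} (hxy : ⁅x, y⁆ = 0) :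
    α ![x, y] = 0 := by
  rw [← hβ, ceD_one_apply]
  simp [hxy, β.map_coord_zero (0 : Fin 1)]

theorem apply_lie_pair_eq_zero_of_ceD_eq_zero {α : AlternatingMap ℝ g ℝ (Fin 2)}
    (hα : ceD g α = 0) {x y z : g} (hxy : ⁅x, y⁆ = 0) (hxz : ⁅x, z⁆ = 0) :
    α ![⁅y, z⁆, x] = 0 := by
  have h := congrFun hα ![x, y, z]
  rw [ceD_two_apply] at h
  simpa [hxy, hxz, AlternatingMap.map_pair_zero_left] using h

def evalPair (x y : g) (hxy : ⁅x, y⁆ = 0) : Hcoh g 2 →ₗ[ℝ] ℝ :=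
  Submodule.liftQ _
    { toFun := fun α => (α : AlternatingMap ℝ g ℝ (Fin 2)) ![x, y]
      map_add' := fun _ _ => rfl
      map_smul' := fun _ _ => rfl }
    (by rintro α ⟨β, hβ⟩; exact apply_pair_eq_zero_of_ceD_eq hβ hxy)

theorem evalPair_cls {x y : g} (hxy : ⁅x, y⁆ = 0) {α : AlternatingMap ℝ g ℝ (Fin 2)}
    (hα : ceD g α = 0) : evalPair x y hxy (cls g α hα) = α ![x, y] :=
  rfl

theorem Hplus_le_ker {M : Type*} [AddCommGroup M] [Module ℝ M] {K : g →ₗ[ℝ] g} {k : ℕ}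
    {φ : Hcoh g k →ₗ[ℝ] M} (h : ∀ α hα, α.compLinearMap K = α → φ (cls g α hα) = 0) :
    Hplus g K k ≤ LinearMap.ker φ :=
  Submodule.span_le.2 fun _ ⟨α, hα, hK, hc⟩ => hc ▸ h α hα hK

theorem Hminus_le_ker {M : Type*} [AddCommGroup M] [Module ℝ M] {K : g →ₗ[ℝ] g} {k : ℕ}
    {φ : Hcoh g k →ₗ[ℝ] M} (h : ∀ α hα, α.compLinearMap K = -α → φ (cls g α hα) = 0) :
    Hminus g K k ≤ LinearMap.ker φ :=
  Submodule.span_le.2 fun _ ⟨α, hα, hK, hc⟩ => hc ▸ h α hα hK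

theorem Module.Basis.coord_lie {ι : Type*} [Fintype ι] (b : Module.Basis ι ℝ g) (k : ι) (x y : g) :
    b.coord k ⁅x, y⁆ = ∑ i, ∑ j, b.coord i x * b.coord j y * b.coord k ⁅b i, b j⁆ := by
  conv_lhs => rw [← b.sum_repr x, ← b.sum_repr y]
  simp only [sum_lie, lie_sum, smul_lie, lie_smul, map_sum, map_smul, smul_eq_mul, Finset.mul_sum,
    Module.Basis.coord_apply]
  rw [Finset.sum_comm]
  exact Finset.sum_congr rfl fun i _ => Finset.sum_congr rfl fun j _ => by ring

end LieCohomology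

noncomputable section

section Solv

variable (g : Type*) [LieRing g] [LieAlgebra ℝ g] (e : Module.Basis (Fin 4) ℝ g)

/-- `g⁺_t = span(e_2, e_3)` (0-indexed: `e 1, e 2`), independent of `t`. -/
def gP : Submodule ℝ g := Submodule.span ℝ {e 1, e 2}

/-- `g⁻_t = span(e_1, e_4 + t e_2)` (0-indexed: `e 0, e 3 + t • e 1`). -/
def gM (t : ℝ) : Submodule ℝ g := Submodule.span ℝ {e 0, e 3 + t • e 1}

variable {g} in
def HasSolvableBrackets : Prop :=
  ∀ i j : Fin 4, i < j → ⁅e i, e j⁆ =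
    (if i = 1 ∧ j = 2 then -e 2 else if i = 1 ∧ j = 3 then e 3 else 0)

section SolvableExample

variable {g e}

theorem HasSolvableBrackets.lie_basis (hbr : HasSolvableBrackets e) (i j : Fin 4) :
    ⁅e i, e j⁆ =
      if i = 1 ∧ j = 2 then -e 2 else if i = 1 ∧ j = 3 then e 3 else
      if i = 2 ∧ j = 1 then e 2 else if i = 3 ∧ j = 1 then -e 3 else 0 := by
  rcases lt_trichotomy i j with h | rfl | h
  · rw [hbr i j h]
    fin_cases i <;> fin_cases j <;> simp_all
  · fin_cases i <;> simp
  · rw [← lie_skew, hbr j i h]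
    fin_cases i <;> fin_cases j <;> simp_all

theorem HasSolvableBrackets.coord_zero_lie (hbr : HasSolvableBrackets e) (x y : g) :
    e.coord 0 ⁅x, y⁆ = 0 := by
  simp [e.coord_lie, Fin.sum_univ_four, hbr.lie_basis]

theorem HasSolvableBrackets.coord_one_lie (hbr : HasSolvableBrackets e) (x y : g) :
    e.coord 1 ⁅x, y⁆ = 0 := by
  simp [e.coord_lie, Fin.sum_univ_four, hbr.lie_basis]

theorem HasSolvableBrackets.coord_two_lie (hbr : HasSolvableBrackets e) (x y : g) :
    e.coord 2 ⁅x, y⁆ = e.coord 2 x * e.coord 1 y - e.coord 1 x * e.coord 2 y := by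
  simp [e.coord_lie, Fin.sum_univ_four, hbr.lie_basis]
  ring

theorem HasSolvableBrackets.coord_three_lie (hbr : HasSolvableBrackets e) (x y : g) :
    e.coord 3 ⁅x, y⁆ = e.coord 1 x * e.coord 3 y - e.coord 3 x * e.coord 1 y := by
  simp [e.coord_lie, Fin.sum_univ_four, hbr.lie_basis]
  ring

theorem HasSolvableBrackets.lie_zero_one (hbr : HasSolvableBrackets e) : ⁅e 0, e 1⁆ = 0 := by
  simpa using hbr 0 1 (by decide)

theorem HasSolvableBrackets.lie_zero_two (hbr : HasSolvableBrackets e) : ⁅e 0, e 2⁆ = 0 := by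
  simpa using hbr 0 2 (by decide)

theorem HasSolvableBrackets.lie_zero_three (hbr : HasSolvableBrackets e) : ⁅e 0, e 3⁆ = 0 := by
  simpa using hbr 0 3 (by decide)

theorem HasSolvableBrackets.lie_one_two (hbr : HasSolvableBrackets e) : ⁅e 1, e 2⁆ = -e 2 := by
  simpa using hbr 1 2 (by decide)

theorem HasSolvableBrackets.lie_one_three (hbr : HasSolvableBrackets e) : ⁅e 1, e 3⁆ = e 3 := by
  simpa using hbr 1 3 (by decide)

theorem HasSolvableBrackets.lie_two_three (hbr : HasSolvableBrackets e) : ⁅e 2, e 3⁆ = 0 := by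
  simpa using hbr 2 3 (by decide)

theorem HasSolvableBrackets.ceD_wedge_zero_one (hbr : HasSolvableBrackets e) :
    ceD g (wedge g ![e.coord 0, e.coord 1]) = 0 := by
  funext x
  simp [ceD_two_apply, wedge_two_apply, hbr.coord_zero_lie, hbr.coord_one_lie]

theorem HasSolvableBrackets.ceD_wedge_two_three (hbr : HasSolvableBrackets e) :
    ceD g (wedge g ![e.coord 2, e.coord 3]) = 0 := by
  funext x
  simp [ceD_two_apply, wedge_two_apply, hbr.coord_two_lie, hbr.coord_three_lie]
  ring

theorem HasSolvableBrackets.ceD_wedge_one_two (hbr : HasSolvableBrackets e) :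
    ceD g (wedge g ![e.coord 1, e.coord 2]) = 0 := by
  funext x
  simp [ceD_two_apply, wedge_two_apply, hbr.coord_one_lie, hbr.coord_two_lie]
  ring

theorem HasSolvableBrackets.ceD_wedge_coord_two (hbr : HasSolvableBrackets e) :
    ceD g (wedge g ![e.coord 2]) = ⇑(wedge g ![e.coord 1, e.coord 2]) := by
  funext x
  simp [ceD_one_apply, wedge_one_apply, wedge_two_apply, hbr.coord_two_lie]
  ring

theorem HasSolvableBrackets.ceD_wedge_coord_three (hbr : HasSolvableBrackets e) :
    ceD g (wedge g ![e.coord 3]) = ⇑(wedge g ![e.coord 3, e.coord 1]) := by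
  funext x
  simp [ceD_one_apply, wedge_one_apply, wedge_two_apply, hbr.coord_three_lie]
  ring

theorem HasSolvableBrackets.apply_zero_two_of_ceD_eq_zero (hbr : HasSolvableBrackets e)
    {α : AlternatingMap ℝ g ℝ (Fin 2)} (hα : ceD g α = 0) : α ![e 0, e 2] = 0 := by
  have h := apply_lie_pair_eq_zero_of_ceD_eq_zero hα hbr.lie_zero_one hbr.lie_zero_two
  rwa [hbr.lie_one_two, α.map_pair_neg_left, neg_eq_zero, α.map_pair_swap, neg_eq_zero] at h

theorem HasSolvableBrackets.apply_zero_three_of_ceD_eq_zero (hbr : HasSolvableBrackets e)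
    {α : AlternatingMap ℝ g ℝ (Fin 2)} (hα : ceD g α = 0) : α ![e 0, e 3] = 0 := by
  have h := apply_lie_pair_eq_zero_of_ceD_eq_zero hα hbr.lie_zero_one hbr.lie_zero_three
  rwa [hbr.lie_one_three, α.map_pair_swap, neg_eq_zero] at h

theorem HasSolvableBrackets.eq_sum_wedge_of_ceD_eq_zero (hbr : HasSolvableBrackets e)
    {α : AlternatingMap ℝ g ℝ (Fin 2)} (hα : ceD g α = 0) :
    α = α ![e 0, e 1] • wedge g ![e.coord 0, e.coord 1] +
        α ![e 2, e 3] • wedge g ![e.coord 2, e.coord 3] +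
      (α ![e 1, e 2] • wedge g ![e.coord 1, e.coord 2] +
        α ![e 3, e 1] • wedge g ![e.coord 3, e.coord 1]) := by
  refine AlternatingMap.ext_basis_pair e fun i j hij => ?_
  fin_cases i <;> fin_cases j <;> simp at hij <;>
    simp [wedge_two_apply, hbr.apply_zero_two_of_ceD_eq_zero hα,
      hbr.apply_zero_three_of_ceD_eq_zero hα, α.map_pair_swap (e 1) (e 3)]

theorem HasSolvableBrackets.cls_eq_smul_add_smul (hbr : HasSolvableBrackets e)
    {α : AlternatingMap ℝ g ℝ (Fin 2)} (hα : ceD g α = 0) :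
    cls g α hα =
      α ![e 0, e 1] • cls g (wedge g ![e.coord 0, e.coord 1]) hbr.ceD_wedge_zero_one +
      α ![e 2, e 3] • cls g (wedge g ![e.coord 2, e.coord 3]) hbr.ceD_wedge_two_three := by
  have hclosed : ceD g (α ![e 0, e 1] • wedge g ![e.coord 0, e.coord 1] +
      α ![e 2, e 3] • wedge g ![e.coord 2, e.coord 3]) = 0 := by
    rw [ceD_add, ceD_smul, ceD_smul, hbr.ceD_wedge_zero_one, hbr.ceD_wedge_two_three]
    simp
  refine (cls_eq_cls_of_ceD_eq_sub hα hclosed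
    (β := α ![e 1, e 2] • wedge g ![e.coord 2] + α ![e 3, e 1] • wedge g ![e.coord 3]) ?_).trans rfl
  rw [ceD_add, ceD_smul, ceD_smul, hbr.ceD_wedge_coord_two, hbr.ceD_wedge_coord_three,
    sub_eq_of_eq_add' (hbr.eq_sum_wedge_of_ceD_eq_zero hα)]
  rfl

theorem HasSolvableBrackets.eq_evalPair_smul_add (hbr : HasSolvableBrackets e) (c : Hcoh g 2) :
    c = evalPair (e 0) (e 1) hbr.lie_zero_one c •
          cls g (wedge g ![e.coord 0, e.coord 1]) hbr.ceD_wedge_zero_one +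
        evalPair (e 2) (e 3) hbr.lie_two_three c •
          cls g (wedge g ![e.coord 2, e.coord 3]) hbr.ceD_wedge_two_three := by
  obtain ⟨⟨α, hα⟩, rfl⟩ := Submodule.Quotient.mk_surjective _ c
  exact hbr.cls_eq_smul_add_smul hα

variable {t : ℝ} {K : g →ₗ[ℝ] g}

theorem apply_basis_zero_of_gM (hKM : ∀ x ∈ gM g e t, K x = -x) : K (e 0) = -e 0 :=
  hKM _ (Submodule.subset_span (by simp))

theorem apply_basis_one_of_gP (hKP : ∀ x ∈ gP g e, K x = x) : K (e 1) = e 1 :=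
  hKP _ (Submodule.subset_span (by simp))

theorem apply_basis_two_of_gP (hKP : ∀ x ∈ gP g e, K x = x) : K (e 2) = e 2 :=
  hKP _ (Submodule.subset_span (by simp))

theorem apply_basis_three_of_gP_gM (hKP : ∀ x ∈ gP g e, K x = x)
    (hKM : ∀ x ∈ gM g e t, K x = -x) : K (e 3) = -(e 3 + (2 * t) • e 1) := by
  have h := hKM (e 3 + t • e 1) (Submodule.subset_span (by simp))
  rw [map_add, map_smul, apply_basis_one_of_gP hKP] at h
  rw [eq_sub_of_add_eq h]
  module

theorem coord_zero_apply_of_gP_gM (hKP : ∀ x ∈ gP g e, K x = x)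
    (hKM : ∀ x ∈ gM g e t, K x = -x) (x : g) : e.coord 0 (K x) = -e.coord 0 x := by
  rw [e.coord_linearMap_apply]
  simp [Fin.sum_univ_four, apply_basis_zero_of_gM hKM,
    apply_basis_one_of_gP hKP, apply_basis_two_of_gP hKP, apply_basis_three_of_gP_gM hKP hKM]

theorem coord_one_apply_of_gP_gM (hKP : ∀ x ∈ gP g e, K x = x)
    (hKM : ∀ x ∈ gM g e t, K x = -x) (x : g) :
    e.coord 1 (K x) = e.coord 1 x - 2 * t * e.coord 3 x := by
  rw [e.coord_linearMap_apply]
  simp [Fin.sum_univ_four, apply_basis_zero_of_gM hKM,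
    apply_basis_one_of_gP hKP, apply_basis_two_of_gP hKP, apply_basis_three_of_gP_gM hKP hKM]
  ring

theorem coord_two_apply_of_gP_gM (hKP : ∀ x ∈ gP g e, K x = x)
    (hKM : ∀ x ∈ gM g e t, K x = -x) (x : g) : e.coord 2 (K x) = e.coord 2 x := by
  rw [e.coord_linearMap_apply]
  simp [Fin.sum_univ_four, apply_basis_zero_of_gM hKM,
    apply_basis_one_of_gP hKP, apply_basis_two_of_gP hKP, apply_basis_three_of_gP_gM hKP hKM]

theorem coord_three_apply_of_gP_gM (hKP : ∀ x ∈ gP g e, K x = x)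
    (hKM : ∀ x ∈ gM g e t, K x = -x) (x : g) : e.coord 3 (K x) = -e.coord 3 x := by
  rw [e.coord_linearMap_apply]
  simp [Fin.sum_univ_four, apply_basis_zero_of_gM hKM,
    apply_basis_one_of_gP hKP, apply_basis_two_of_gP hKP, apply_basis_three_of_gP_gM hKP hKM]

theorem wedge_two_three_compLinearMap_of_gP_gM (hKP : ∀ x ∈ gP g e, K x = x)
    (hKM : ∀ x ∈ gM g e t, K x = -x) :
    (wedge g ![e.coord 2, e.coord 3]).compLinearMap K = -wedge g ![e.coord 2, e.coord 3] := by
  ext v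
  simp [wedge_two_apply, coord_two_apply_of_gP_gM hKP hKM, coord_three_apply_of_gP_gM hKP hKM]
  ring

theorem wedge_zero_one_compLinearMap_of_gP_gM_zero (hKP : ∀ x ∈ gP g e, K x = x)
    (hKM : ∀ x ∈ gM g e 0, K x = -x) :
    (wedge g ![e.coord 0, e.coord 1]).compLinearMap K = -wedge g ![e.coord 0, e.coord 1] := by
  ext v
  simp [wedge_two_apply, coord_zero_apply_of_gP_gM hKP hKM, coord_one_apply_of_gP_gM hKP hKM]
  ring

theorem wedge_compLinearMap_of_gP_gM_of_ne_zero (ht : t ≠ 0) (hKP : ∀ x ∈ gP g e, K x = x)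
    (hKM : ∀ x ∈ gM g e t, K x = -x) :
    (wedge g ![e.coord 2, e.coord 3] + (1 / t) • wedge g ![e.coord 1, e.coord 2]).compLinearMap K =
      wedge g ![e.coord 2, e.coord 3] + (1 / t) • wedge g ![e.coord 1, e.coord 2] := by
  ext v
  simp [wedge_two_apply, coord_one_apply_of_gP_gM hKP hKM, coord_two_apply_of_gP_gM hKP hKM,
    coord_three_apply_of_gP_gM hKP hKM]
  field_simp
  ring

theorem Hplus_le_ker_evalPair_zero_one (hbr : HasSolvableBrackets e)
    (hKP : ∀ x ∈ gP g e, K x = x) (hKM : ∀ x ∈ gM g e t, K x = -x) :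
    Hplus g K 2 ≤ LinearMap.ker (evalPair (e 0) (e 1) hbr.lie_zero_one) := by
  refine Hplus_le_ker fun α hα hK => ?_
  have h := congrArg (· ![e 0, e 1]) hK
  simp only [α.compLinearMap_apply_pair, apply_basis_zero_of_gM hKM, apply_basis_one_of_gP hKP,
    α.map_pair_neg_left] at h
  rw [evalPair_cls]
  linarith

theorem Hminus_le_ker_evalPair_zero_one (hbr : HasSolvableBrackets e) (ht : t ≠ 0)
    (hKP : ∀ x ∈ gP g e, K x = x) (hKM : ∀ x ∈ gM g e t, K x = -x) :
    Hminus g K 2 ≤ LinearMap.ker (evalPair (e 0) (e 1) hbr.lie_zero_one) := by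
  refine Hminus_le_ker fun α hα hK => ?_
  have h := congrArg (· ![e 0, e 3]) hK
  simp only [α.compLinearMap_apply_pair, apply_basis_zero_of_gM hKM,
    apply_basis_three_of_gP_gM hKP hKM, α.map_pair_neg_left, α.map_pair_neg_right, neg_neg,
    α.map_pair_add_smul_right, hbr.apply_zero_three_of_ceD_eq_zero hα,
    AlternatingMap.neg_apply] at h
  rw [evalPair_cls]
  simpa [ht] using h

theorem Hplus_le_ker_evalPair_two_three (hbr : HasSolvableBrackets e)
    (hKP : ∀ x ∈ gP g e, K x = x) (hKM : ∀ x ∈ gM g e 0, K x = -x) :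
    Hplus g K 2 ≤ LinearMap.ker (evalPair (e 2) (e 3) hbr.lie_two_three) := by
  refine Hplus_le_ker fun α hα hK => ?_
  have h := congrArg (· ![e 2, e 3]) hK
  simp only [α.compLinearMap_apply_pair, apply_basis_two_of_gP hKP,
    apply_basis_three_of_gP_gM hKP hKM, α.map_pair_neg_right, mul_zero, zero_smul,
    add_zero] at h
  rw [evalPair_cls]
  linarith

theorem Hplus_eq_bot_of_gM_zero (hbr : HasSolvableBrackets e)
    (hKP : ∀ x ∈ gP g e, K x = x) (hKM : ∀ x ∈ gM g e 0, K x = -x) : Hplus g K 2 = ⊥ := by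
  refine eq_bot_iff.2 fun c hc => ?_
  have h01 := Hplus_le_ker_evalPair_zero_one hbr hKP hKM hc
  have h23 := Hplus_le_ker_evalPair_two_three hbr hKP hKM hc
  rw [LinearMap.mem_ker] at h01 h23
  rw [hbr.eq_evalPair_smul_add c, h01, h23, zero_smul, zero_smul, add_zero]
  exact Submodule.zero_mem _

theorem Hminus_eq_top_of_gM_zero (hbr : HasSolvableBrackets e)
    (hKP : ∀ x ∈ gP g e, K x = x) (hKM : ∀ x ∈ gM g e 0, K x = -x) : Hminus g K 2 = ⊤ := by
  refine eq_top_iff.2 fun c _ => ?_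
  rw [hbr.eq_evalPair_smul_add c]
  exact add_mem
    (Submodule.smul_mem _ _ (Submodule.subset_span ⟨_, _,
      wedge_zero_one_compLinearMap_of_gP_gM_zero hKP hKM, rfl⟩))
    (Submodule.smul_mem _ _ (Submodule.subset_span ⟨_, _,
      wedge_two_three_compLinearMap_of_gP_gM hKP hKM, rfl⟩))

theorem HasSolvableBrackets.not_exists_ceD_eq_wedge_two_three (hbr : HasSolvableBrackets e) :
    ¬∃ β : AlternatingMap ℝ g ℝ (Fin 1), ceD g β = ⇑(wedge g ![e.coord 2, e.coord 3]) :=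
  fun ⟨_, hβ⟩ => by simpa [wedge_two_apply] using apply_pair_eq_zero_of_ceD_eq hβ hbr.lie_two_three

theorem cls_wedge_two_three_mem_Hplus (hbr : HasSolvableBrackets e) (ht : t ≠ 0)
    (hKP : ∀ x ∈ gP g e, K x = x) (hKM : ∀ x ∈ gM g e t, K x = -x) :
    cls g (wedge g ![e.coord 2, e.coord 3]) hbr.ceD_wedge_two_three ∈ Hplus g K 2 := by
  have hclosed : ceD g (wedge g ![e.coord 2, e.coord 3] +
      (1 / t) • wedge g ![e.coord 1, e.coord 2]) = 0 := by
    rw [ceD_add, ceD_smul, hbr.ceD_wedge_two_three, hbr.ceD_wedge_one_two]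
    simp
  rw [cls_eq_cls_of_ceD_eq_sub _ hclosed (β := -(1 / t) • wedge g ![e.coord 2])
    (by rw [ceD_smul, hbr.ceD_wedge_coord_two]; ext; simp)]
  exact Submodule.subset_span ⟨_, _, wedge_compLinearMap_of_gP_gM_of_ne_zero ht hKP hKM, rfl⟩

theorem cls_wedge_zero_one_not_mem_sup (hbr : HasSolvableBrackets e) (ht : t ≠ 0)
    (hKP : ∀ x ∈ gP g e, K x = x) (hKM : ∀ x ∈ gM g e t, K x = -x) :
    cls g (wedge g ![e.coord 0, e.coord 1]) hbr.ceD_wedge_zero_one ∉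
      Hplus g K 2 ⊔ Hminus g K 2 := fun hmem => by
  have h := sup_le (Hplus_le_ker_evalPair_zero_one hbr hKP hKM)
    (Hminus_le_ker_evalPair_zero_one hbr ht hKP hKM) hmem
  simp [evalPair_cls, wedge_two_apply] at h

end SolvableExample

/-- On the 4-dimensional solvable Lie algebra with
`[e_2,e_3] = −e_3`, `[e_2,e_4] = e_4`, the D-complex structure `K_0` is linear
C∞-pure-and-full at the 2nd stage, whereas for `t ≠ 0` the structure `K_t` is
neither linear C∞-pure at the 2nd stage
(`0 ≠ [e^3∧e^4] ∈ H^{2+}_{K_t} ∩ H^{2−}_{K_t}`) nor linear C∞-full at the 2nd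
stage (`[e^1∧e^2] ∉ H^{2+}_{K_t} + H^{2−}_{K_t}`). -/
theorem solvable_deformation_pure_full_unstable
    (hbr : ∀ i j : Fin 4, i < j → ⁅e i, e j⁆ =
      (if i = 1 ∧ j = 2 then -e 2 else if i = 1 ∧ j = 3 then e 3 else 0)) :
    (∀ K : g →ₗ[ℝ] g, (∀ x ∈ gP g e, K x = x) → (∀ x ∈ gM g e 0, K x = -x) →
      Hplus g K 2 ⊓ Hminus g K 2 = ⊥ ∧ Hplus g K 2 ⊔ Hminus g K 2 = ⊤) ∧
    (∀ t : ℝ, t ≠ 0 → ∀ K : g →ₗ[ℝ] g,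
      (∀ x ∈ gP g e, K x = x) → (∀ x ∈ gM g e t, K x = -x) →
      (wedge g ![e.coord 2, e.coord 3]).compLinearMap K =
        -(wedge g ![e.coord 2, e.coord 3]) ∧
      ceD g (wedge g ![e.coord 2]) = ⇑(wedge g ![e.coord 1, e.coord 2]) ∧
      (wedge g ![e.coord 2, e.coord 3] +
          (1 / t) • wedge g ![e.coord 1, e.coord 2]).compLinearMap K =
        wedge g ![e.coord 2, e.coord 3] +
          (1 / t) • wedge g ![e.coord 1, e.coord 2] ∧
      ¬ (∃ β : AlternatingMap ℝ g ℝ (Fin 1),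
          ceD g β = ⇑(wedge g ![e.coord 2, e.coord 3])) ∧
      (∃ h34 : ceD g (wedge g ![e.coord 2, e.coord 3]) = 0,
        cls g (wedge g ![e.coord 2, e.coord 3]) h34 ≠ 0 ∧
        cls g (wedge g ![e.coord 2, e.coord 3]) h34 ∈
          Hplus g K 2 ⊓ Hminus g K 2) ∧
      (∃ h12 : ceD g (wedge g ![e.coord 0, e.coord 1]) = 0,
        cls g (wedge g ![e.coord 0, e.coord 1]) h12 ∉
          Hplus g K 2 ⊔ Hminus g K 2)) := by
  have hbr : HasSolvableBrackets e := hbr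
  refine ⟨fun K hKP hKM => ⟨?_, ?_⟩, fun t ht K hKP hKM => ?_⟩
  · rw [Hplus_eq_bot_of_gM_zero hbr hKP hKM, bot_inf_eq]
  · rw [Hminus_eq_top_of_gM_zero hbr hKP hKM, sup_top_eq]
  have hanti := wedge_two_three_compLinearMap_of_gP_gM hKP hKM
  refine ⟨hanti, hbr.ceD_wedge_coord_two, wedge_compLinearMap_of_gP_gM_of_ne_zero ht hKP hKM,
    hbr.not_exists_ceD_eq_wedge_two_three, ⟨hbr.ceD_wedge_two_three, ?_, ?_⟩,
    ⟨hbr.ceD_wedge_zero_one, cls_wedge_zero_one_not_mem_sup hbr ht hKP hKM⟩⟩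
  · exact (cls_eq_zero_iff _).not.2 hbr.not_exists_ceD_eq_wedge_two_three
  · exact ⟨cls_wedge_two_three_mem_Hplus hbr ht hKP hKM,
      Submodule.subset_span ⟨_, _, hanti, rfl⟩⟩

end Solv

end
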